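/- arXiv:1405.0303 — 3 statements merged into one kernel-verified Lean document; each statement's English description precedes it below -/
import Mathlib

section
/- A linear map T from R^X to R^X (with X finite) given by a matrix with column sums equal to 1 has all entries nonnegative (i.e. is a stochastic matrix) if and only if it is a contraction in the L1 norm: for every vector v, ‖T v‖₁ ≤ ‖v‖₁, where ‖v‖₁ = Σ_x |v(x)|. -/
section

open Finset Matrix

variable {R : Type*} [CommRing R] [LinearOrder R] [IsStrictOrderedRing R]

theorem Finset.nonneg_of_sum_abs_le_sum {ι : Type*} {s : Finset ι} {f : ι → R}
    (h : ∑ i ∈ s, |f i| ≤ ∑ i ∈ s, f i) {i : ι} (hi : i ∈ s) : 0 ≤ f i := by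
  have hgap : ∑ j ∈ s, (|f j| - f j) ≤ 0 := by rw [sum_sub_distrib]; exact sub_nonpos.mpr h
  have hi_gap : |f i| - f i ≤ ∑ j ∈ s, (|f j| - f j) :=
    single_le_sum (fun j _ => sub_nonneg.mpr (le_abs_self (f j))) hi
  linarith [abs_nonneg (f i)]

namespace Matrix

variable {m n : Type*} [Fintype m] [Fintype n]

theorem sum_abs_mulVec_le_of_nonneg {T : Matrix m n R} (hT : ∀ i j, 0 ≤ T i j) (v : n → R) :
    ∑ i, |(T *ᵥ v) i| ≤ ∑ j, (∑ i, T i j) * |v j| :=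
  calc ∑ i, |(T *ᵥ v) i| ≤ ∑ i, ∑ j, T i j * |v j| := by
        gcongr with i
        refine (abs_sum_le_sum_abs _ _).trans_eq (sum_congr rfl fun j _ => ?_)
        rw [abs_mul, abs_of_nonneg (hT i j)]
    _ = ∑ j, (∑ i, T i j) * |v j| := by simp only [sum_mul]; exact sum_comm

theorem sum_abs_mulVec_le_sum_abs {T : Matrix m n R} (hT : ∀ i j, 0 ≤ T i j)
    (hsum : ∀ j, ∑ i, T i j ≤ 1) (v : n → R) : ∑ i, |(T *ᵥ v) i| ≤ ∑ j, |v j| :=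
  (sum_abs_mulVec_le_of_nonneg hT v).trans <| sum_le_sum fun j _ =>
    mul_le_of_le_one_left (abs_nonneg _) (hsum j)

theorem nonneg_of_sum_abs_mulVec_le_sum_abs [DecidableEq n] {T : Matrix m n R}
    (hsum : ∀ j, 1 ≤ ∑ i, T i j) (hT : ∀ v : n → R, ∑ i, |(T *ᵥ v) i| ≤ ∑ j, |v j|)
    (i : m) (j : n) : 0 ≤ T i j := by
  have hcol : ∑ i, |T i j| ≤ ∑ i, T i j :=
    calc ∑ i, |T i j| = ∑ i, |(T *ᵥ Pi.single j 1) i| := by simp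
      _ ≤ ∑ k, |Pi.single j (1 : R) k| := hT _
      _ = 1 := by simp [Pi.single_apply, apply_ite]
      _ ≤ ∑ i, T i j := hsum j
  exact nonneg_of_sum_abs_le_sum hcol (mem_univ i)

end Matrix

end

/-- A linear map on `ℝ^X` given by a matrix with column sums equal to `1` has all entries
nonnegative (i.e. is a stochastic matrix) if and only if it is an `L¹`-contraction. -/
theorem stochastic_iff_l1_contraction {X : Type*} [Fintype X]
    (T : Matrix X X ℝ) (hsum : ∀ x1, ∑ x2, T x2 x1 = 1) :
    (∀ x2 x1, 0 ≤ T x2 x1) ↔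
      ∀ v : X → ℝ, ∑ x2, |∑ x1, T x2 x1 * v x1| ≤ ∑ x, |v x| := by
  classical
  exact ⟨fun hT => Matrix.sum_abs_mulVec_le_sum_abs hT (fun j => (hsum j).le),
    Matrix.nonneg_of_sum_abs_mulVec_le_sum_abs (fun j => (hsum j).ge)⟩
end

section
/- For the qubit pure dephasing dynamics with coherence factor R(t) ∈ (0,1), the quantum relative entropy between evolved states of ρ₁ = ½[[1,1],[1,1]] and ρ₂ = ½[[1,−1],[−1,1]] equals R(t)·log[(1+R(t))/(1−R(t))]. -/
/-!
Both evolved states have spectrum in `{p, q}` with `p = (1 + R)/2`, `q = (1 - R)/2`. On a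
two-point set `log` agrees with an affine function `a + b x`, so `log ρ = a + b ρ` for both
states with the same `a` and `b = log (p/q) / R`. The `a`-terms cancel in `S(ρ₁‖ρ₂)`, leaving
`b · Tr ρ₁(ρ₁ - ρ₂) = b R²`.
-/

open Matrix
open scoped ComplexOrder

/-- The functional-calculus logarithm of a Hermitian matrix, restricted to its support
(eigenvalue `0` is sent to `0` since `Real.log 0 = 0`); junk value `0` off Hermitian. -/
noncomputable def matLog {n : Type*} [Fintype n] [DecidableEq n]
    (A : Matrix n n ℂ) : Matrix n n ℂ :=
  if h : A.IsHermitian then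
    (h.eigenvectorUnitary : Matrix n n ℂ) *
      Matrix.diagonal (fun i => (Real.log (h.eigenvalues i) : ℂ)) *
      (star h.eigenvectorUnitary : Matrix n n ℂ)
  else 0

/-- The quantum relative entropy `S(ρ‖σ) = Tr(ρ log ρ) − Tr(ρ log σ)`. -/
noncomputable def relEntropy {n : Type*} [Fintype n] [DecidableEq n]
    (ρ σ : Matrix n n ℂ) : ℝ :=
  ((ρ * matLog ρ).trace).re - ((ρ * matLog σ).trace).re

open Polynomial in
theorem spectrum_subset_pair_of_mul_sub_eq_zero {𝕜 A : Type*} [Field 𝕜] [Ring A] [Algebra 𝕜 A]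
    [Nontrivial A] {a : A} {p q : 𝕜}
    (h : (a - algebraMap 𝕜 A p) * (a - algebraMap 𝕜 A q) = 0) : spectrum 𝕜 a ⊆ {p, q} := by
  intro x hx
  have hmem := spectrum.subset_polynomial_aeval a ((X - C p) * (X - C q)) ⟨x, hx, rfl⟩
  simp only [eval_mul, eval_sub, eval_X, eval_C, map_mul, map_sub, aeval_X, aeval_C] at hmem
  rwa [h, spectrum.zero_eq, Set.mem_singleton_iff, mul_eq_zero, sub_eq_zero, sub_eq_zero] at hmem

theorem matLog_eq_cfc {n : Type*} [Fintype n] [DecidableEq n] {A : Matrix n n ℂ}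
    (hA : A.IsHermitian) : matLog A = cfc Real.log A := by
  rw [matLog, dif_pos hA, hA.cfc_eq, IsHermitian.cfc, Unitary.conjStarAlgAut_apply]
  rfl

theorem matLog_eq_of_log_eq_affine {n : Type*} [Fintype n] [DecidableEq n] {A : Matrix n n ℂ}
    (hA : A.IsHermitian) {a b : ℝ} (h : ∀ x ∈ spectrum ℝ A, Real.log x = a + b * x) :
    matLog A = algebraMap ℝ _ a + b • A := by
  rw [matLog_eq_cfc hA, cfc_congr h, cfc_const_add a _ A, cfc_const_mul_id b A]

theorem relEntropy_eq_of_matLog_eq_affine {n : Type*} [Fintype n] [DecidableEq n]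
    {ρ σ : Matrix n n ℂ} {a b : ℝ} (hρ : matLog ρ = algebraMap ℝ _ a + b • ρ)
    (hσ : matLog σ = algebraMap ℝ _ a + b • σ) :
    relEntropy ρ σ = b * (ρ * (ρ - σ)).trace.re := by
  rw [relEntropy, ← Complex.sub_re, ← trace_sub, ← mul_sub, hρ, hσ, add_sub_add_left_eq_sub,
    ← smul_sub, mul_smul_comm, trace_smul, Complex.smul_re, smul_eq_mul]

theorem eq_add_slope_mul_of_mem_pair (f : ℝ → ℝ) {p q x : ℝ} (hx : x ∈ ({p, q} : Set ℝ)) :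
    f x = (f p - slope f p q * p) + slope f p q * x := by
  rcases hx with rfl | rfl
  · ring
  · have := sub_smul_slope_vadd f p x
    simp only [smul_eq_mul, vadd_eq_add] at this
    linarith

/-- The qubit state `½(I + c σₓ)`; dephasing with coherence factor `R` sends `ρ₁, ρ₂` to
`qubitState R, qubitState (-R)`. -/
noncomputable def qubitState (c : ℝ) : Matrix (Fin 2) (Fin 2) ℂ :=
  !![1/2, (c : ℂ)/2; (c : ℂ)/2, 1/2]

theorem qubitState_isHermitian (c : ℝ) : (qubitState c).IsHermitian := by
  ext i j
  fin_cases i <;> fin_cases j <;> simp [qubitState, conjTranspose_apply]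

theorem spectrum_qubitState_subset (c : ℝ) :
    spectrum ℝ (qubitState c) ⊆ {(1 + c)/2, (1 - c)/2} := by
  apply spectrum_subset_pair_of_mul_sub_eq_zero
  ext i j
  fin_cases i <;> fin_cases j <;>
    simp [qubitState, Matrix.mul_apply, Fin.sum_univ_two, Algebra.algebraMap_eq_smul_one] <;> ring

theorem trace_qubitState_mul_sub (c d : ℝ) :
    (qubitState c * (qubitState c - qubitState d)).trace.re = c * (c - d) / 2 := by
  simp only [qubitState, trace_fin_two, Matrix.mul_apply, Fin.sum_univ_two, Matrix.sub_apply,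
    of_apply, cons_val', cons_val_zero, cons_val_one, cons_val_fin_one, Complex.add_re,
    Complex.mul_re, Complex.sub_re, Complex.div_ofNat_re, Complex.div_ofNat_im, Complex.ofReal_re,
    Complex.ofReal_im, Complex.sub_im]
  ring

/-- For qubit pure dephasing with coherence factor `R ∈ (0,1)`, the quantum relative
entropy between the evolved states of `ρ₁ = ½[[1,1],[1,1]]` and `ρ₂ = ½[[1,−1],[−1,1]]`
equals `R·log[(1+R)/(1−R)]`. -/
theorem dephasing_relative_entropy (R : ℝ) (hR0 : 0 < R) (hR1 : R < 1) :
    relEntropy !![(1/2 : ℂ), (R : ℂ)/2; (R : ℂ)/2, 1/2]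
        !![(1/2 : ℂ), -((R : ℂ)/2); -((R : ℂ)/2), 1/2]
      = R * Real.log ((1 + R) / (1 - R)) := by
  have hρ₂ : !![(1/2 : ℂ), -((R : ℂ)/2); -((R : ℂ)/2), 1/2] = qubitState (-R) := by
    simp [qubitState, neg_div]
  set p := (1 + R)/2 with hp
  set q := (1 - R)/2 with hq
  have hspec_neg : spectrum ℝ (qubitState (-R)) ⊆ {p, q} := by
    rw [Set.pair_comm]
    convert spectrum_qubitState_subset (-R) using 3 <;> ring
  have hmatLog (c : ℝ) (hc : spectrum ℝ (qubitState c) ⊆ {p, q}) :=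
    matLog_eq_of_log_eq_affine (qubitState_isHermitian c)
      fun x hx ↦ eq_add_slope_mul_of_mem_pair Real.log (hc hx)
  rw [hρ₂, show !![(1/2 : ℂ), (R : ℂ)/2; (R : ℂ)/2, 1/2] = qubitState R from rfl,
    relEntropy_eq_of_matLog_eq_affine (hmatLog R (spectrum_qubitState_subset R))
      (hmatLog (-R) hspec_neg),
    trace_qubitState_mul_sub, slope_def_field]
  have hratio : (1 + R) / (1 - R) = p / q := by
    rw [hp, hq]
    field_simp
  rw [hratio, Real.log_div (x := p) (y := q) (by linarith) (by linarith), show q - p = -R by ring]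
  field_simp
  ring
end

section
/- There exists a stochastic process on two states and three times that is divisible but not Markovian: defining joint probabilities P(x3;x2;x1) = ¼(δ_{x3,0}δ_{x2,0}δ_{x1,1} + δ_{x3,0}δ_{x2,1}δ_{x1,0} + δ_{x3,1}δ_{x2,0}δ_{x1,0} + δ_{x3,1}δ_{x2,1}δ_{x1,1}), all two-point transition matrices equal ½ (hence satisfy the divisibility conditions), yet P(1,t3|0,t2;0,t1) = 1 ≠ 0 = P(1,t3|0,t2;1,t1), so the Markov condition fails. -/
/-!
`J` is the uniform distribution on the triples `(x3, x2, x1)` with `x3 + x2 + x1` odd. Any two of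
the three variables are therefore independent and uniform: every two-point marginal is `1/4`, so
every transition matrix has all entries `1/2`, and such matrices are stochastic and compose. Yet
`x3` is a function of `(x2, x1)`, so conditioning on `x1` as well changes the prediction for `x3`.
-/

/-- Kronecker delta on `Fin 2`, valued in `ℝ`. -/
def kd (a b : Fin 2) : ℝ := if a = b then 1 else 0

/-- The joint probability `P(x3,t3; x2,t2; x1,t1)` of the example. -/
noncomputable def J (x3 x2 x1 : Fin 2) : ℝ :=
  (1 / 4) * (kd x3 0 * kd x2 0 * kd x1 1 + kd x3 0 * kd x2 1 * kd x1 0 +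
    kd x3 1 * kd x2 0 * kd x1 0 + kd x3 1 * kd x2 1 * kd x1 1)

/-- Transition matrix `T(x3,t3|x2,t2)`. -/
noncomputable def T32 (x' x : Fin 2) : ℝ := (∑ y, J x' x y) / (∑ p, ∑ y, J p x y)

/-- Transition matrix `T(x2,t2|x1,t1)`. -/
noncomputable def T21 (x' x : Fin 2) : ℝ := (∑ p, J p x' x) / (∑ p, ∑ q, J p q x)

/-- Transition matrix `T(x3,t3|x1,t1)`. -/
noncomputable def T31 (x' x : Fin 2) : ℝ := (∑ y, J x' y x) / (∑ p, ∑ q, J p q x)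

lemma J_one_zero_zero : J 1 0 0 = 1 / 4 := by
  norm_num [J, kd]

lemma J_one_zero_one : J 1 0 1 = 0 := by
  norm_num [J, kd]

lemma sum_J_fst (x2 x1 : Fin 2) : ∑ p, J p x2 x1 = 1 / 4 := by
  fin_cases x2 <;> fin_cases x1 <;> norm_num [J, kd, Fin.sum_univ_two]

lemma sum_J_snd (x3 x1 : Fin 2) : ∑ q, J x3 q x1 = 1 / 4 := by
  fin_cases x3 <;> fin_cases x1 <;> norm_num [J, kd, Fin.sum_univ_two]

lemma sum_J_thd (x3 x2 : Fin 2) : ∑ y, J x3 x2 y = 1 / 4 := by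
  fin_cases x3 <;> fin_cases x2 <;> norm_num [J, kd, Fin.sum_univ_two]

lemma T32_eq_half (x' x : Fin 2) : T32 x' x = 1 / 2 := by
  simp only [T32, sum_J_thd]
  norm_num

lemma T21_eq_half (x' x : Fin 2) : T21 x' x = 1 / 2 := by
  rw [T21, sum_J_fst, Finset.sum_comm]
  simp only [sum_J_fst]
  norm_num

lemma T31_eq_half (x' x : Fin 2) : T31 x' x = 1 / 2 := by
  simp only [T31, sum_J_snd]
  norm_num

/-- A divisible but non-Markovian process on two states and three times: all two-point
transition matrices equal `1/2` (hence are nonnegative, column-stochastic and satisfy the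
composition law), yet `P(1,t3|0,t2;0,t1) = 1 ≠ 0 = P(1,t3|0,t2;1,t1)`, so the Markov
condition fails. -/
theorem divisible_not_markov :
    (∀ x' x : Fin 2, T32 x' x = 1 / 2) ∧
    (∀ x' x : Fin 2, T21 x' x = 1 / 2) ∧
    (∀ x' x : Fin 2, T31 x' x = 1 / 2) ∧
    -- divisibility conditions
    (∀ x' x : Fin 2, 0 ≤ T32 x' x ∧ 0 ≤ T21 x' x ∧ 0 ≤ T31 x' x) ∧
    (∀ x : Fin 2, (∑ x', T32 x' x) = 1 ∧ (∑ x', T21 x' x) = 1 ∧ (∑ x', T31 x' x) = 1) ∧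
    (∀ x3 x1 : Fin 2, T31 x3 x1 = ∑ x2, T32 x3 x2 * T21 x2 x1) ∧
    -- the Markov condition fails
    J 1 0 0 / (∑ p, J p 0 0) = 1 ∧ J 1 0 1 / (∑ p, J p 0 1) = 0 ∧
    (1 : ℝ) ≠ 0 := by
  refine ⟨T32_eq_half, T21_eq_half, T31_eq_half, fun x' x => ?_, fun x => ?_, fun x3 x1 => ?_,
    ?_, ?_, one_ne_zero⟩
  · simp only [T32_eq_half, T21_eq_half, T31_eq_half]
    norm_num
  · simp only [T32_eq_half, T21_eq_half, T31_eq_half]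
    norm_num
  · simp only [T32_eq_half, T21_eq_half, T31_eq_half]
    norm_num
  · rw [J_one_zero_zero, sum_J_fst]
    norm_num
  · rw [J_one_zero_one, zero_div]
end
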